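/- For a probability distribution (p₁,...,pₙ) and density matrices ρ₁,...,ρₙ on a finite-dimensional Hilbert space, ∑ᵢ pᵢ·S(ρᵢ) ≤ S(∑ᵢ pᵢρᵢ), where S(ρ) = -Tr(ρ·log₂ρ) is the von Neumann entropy (concavity of von Neumann entropy). -/

import Mathlib

/-!
Let `e` be an orthonormal eigenbasis of the mixture `σ = ∑ i, p i • ρ i`. Its eigenvalues `λ k`
are the diagonal entries `⟪e k, σ e k⟫ = ∑ i, p i * ⟪e k, ρ i e k⟫`, so concavity of
`η = negMulLog` gives `∑ i, p i * ∑ k, η ⟪e k, ρ i e k⟫ ≤ ∑ k, η (λ k)`. On the other hand, the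
diagonal of a Hermitian matrix in any orthonormal basis `e` is the image of its spectrum under the
doubly stochastic matrix `‖⟪e k, u j⟫‖²`, where `u` is an eigenbasis; Jensen's inequality row by
row then shows that a concave function summed over the diagonal dominates its sum over the
spectrum, so `η` summed over the eigenvalues of `ρ i` is at most `∑ k, η ⟪e k, ρ i e k⟫`.
-/

open scoped ComplexOrder

/-- Von Neumann entropy (in bits) of a Hermitian matrix, via its eigenvalues. -/
noncomputable def vnEntropy {d : ℕ} {ρ : Matrix (Fin d) (Fin d) ℂ} (h : ρ.IsHermitian) : ℝ :=
  (∑ i, Real.negMulLog (h.eigenvalues i)) / Real.log 2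

open scoped InnerProductSpace
open Matrix

theorem ConcaveOn.sum_map_le_sum_map_mulVec {n : Type*} [Fintype n] [DecidableEq n] {s : Set ℝ}
    {f : ℝ → ℝ} (hf : ConcaveOn ℝ s f) {M : Matrix n n ℝ} (hM : M ∈ doublyStochastic ℝ n)
    {x : n → ℝ} (hx : ∀ j, x j ∈ s) :
    ∑ j, f (x j) ≤ ∑ i, f ((M *ᵥ x) i) :=
  calc ∑ j, f (x j) = ∑ i, ∑ j, M i j * f (x j) := by
        rw [Finset.sum_comm]
        simp_rw [← Finset.sum_mul, sum_col_of_mem_doublyStochastic hM, one_mul]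
    _ ≤ ∑ i, f ((M *ᵥ x) i) := Finset.sum_le_sum fun i _ =>
        hf.le_map_sum (fun j _ => nonneg_of_mem_doublyStochastic hM)
          (sum_row_of_mem_doublyStochastic hM i) (fun j _ => hx j)

theorem OrthonormalBasis.norm_inner_sq_mem_doublyStochastic {𝕜 E ι : Type*} [RCLike 𝕜]
    [NormedAddCommGroup E] [InnerProductSpace 𝕜 E] [Fintype ι] [DecidableEq ι]
    (b c : OrthonormalBasis ι 𝕜 E) :
    of (fun i j => ‖⟪b i, c j⟫_𝕜‖ ^ 2) ∈ doublyStochastic ℝ ι := by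
  refine mem_doublyStochastic_iff_sum.2 ⟨fun i j => sq_nonneg _, fun i => ?_, fun j => ?_⟩
  · simp [c.sum_sq_norm_inner_left, b.orthonormal.1 i]
  · simp [b.sum_sq_norm_inner_right, c.orthonormal.1 j]

namespace Matrix.IsHermitian

variable {𝕜 n : Type*} [RCLike 𝕜] [Fintype n] [DecidableEq n] {A : Matrix n n 𝕜}

theorem re_dotProduct_mulVec_eq_sum (hA : A.IsHermitian) (x : EuclideanSpace 𝕜 n) :
    RCLike.re (star ⇑x ⬝ᵥ A *ᵥ ⇑x)
      = ∑ j, ‖⟪x, hA.eigenvectorBasis j⟫_𝕜‖ ^ 2 * hA.eigenvalues j := by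
  set u := hA.eigenvectorBasis
  have hu (j : n) : star ⇑(u j) ⬝ᵥ A *ᵥ ⇑x = hA.eigenvalues j * ⟪u j, x⟫_𝕜 := by
    have hstar : star ⇑(u j) ᵥ* A = star (A *ᵥ ⇑(u j)) := by rw [star_mulVec, hA.eq]
    rw [dotProduct_mulVec, hstar, hA.mulVec_eigenvectorBasis, star_smul, smul_dotProduct,
      EuclideanSpace.inner_eq_star_dotProduct, dotProduct_comm, RCLike.real_smul_eq_coe_mul,
      star_trivial]
  have hinner (v : EuclideanSpace 𝕜 n) :
      star ⇑v ⬝ᵥ A *ᵥ ⇑x = ⟪v, WithLp.toLp 2 (A *ᵥ ⇑x)⟫_𝕜 := dotProduct_comm _ _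
  rw [hinner, ← u.sum_inner_mul_inner, map_sum]
  refine Finset.sum_congr rfl fun j _ => ?_
  rw [← hinner, hu, ← inner_conj_symm x (u j), mul_left_comm, RCLike.conj_mul, RCLike.norm_conj]
  norm_cast
  exact mul_comm _ _

theorem sum_map_eigenvalues_le_sum_map_re_dotProduct_mulVec (hA : A.IsHermitian)
    (b : OrthonormalBasis n 𝕜 (EuclideanSpace 𝕜 n)) {s : Set ℝ} {f : ℝ → ℝ}
    (hf : ConcaveOn ℝ s f) (hs : ∀ j, hA.eigenvalues j ∈ s) :
    ∑ j, f (hA.eigenvalues j) ≤ ∑ i, f (RCLike.re (star ⇑(b i) ⬝ᵥ A *ᵥ ⇑(b i))) := by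
  have hdiag (i : n) : RCLike.re (star ⇑(b i) ⬝ᵥ A *ᵥ ⇑(b i))
      = (of (fun i j => ‖⟪b i, hA.eigenvectorBasis j⟫_𝕜‖ ^ 2) *ᵥ hA.eigenvalues) i :=
    hA.re_dotProduct_mulVec_eq_sum (b i)
  simpa only [hdiag] using
    hf.sum_map_le_sum_map_mulVec (b.norm_inner_sq_mem_doublyStochastic hA.eigenvectorBasis) hs

end Matrix.IsHermitian

theorem vnEntropy_concave_general {n d : ℕ} (p : Fin n → ℝ) (ρ : Fin n → Matrix (Fin d) (Fin d) ℂ)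
    (hp : ∀ i, 0 ≤ p i) (hp1 : ∑ i, p i = 1)
    (hρ : ∀ i, (ρ i).PosSemidef)
    (hmix : (∑ i, (p i : ℂ) • ρ i).IsHermitian) :
    ∑ i, p i * vnEntropy (hρ i).isHermitian ≤ vnEntropy hmix := by
  set e := hmix.eigenvectorBasis
  set D : Fin n → Fin d → ℝ := fun i k => RCLike.re (star ⇑(e k) ⬝ᵥ ρ i *ᵥ ⇑(e k))
  have hmix_eig (k : Fin d) : hmix.eigenvalues k = ∑ i, p i * D i k := by
    simp [hmix.eigenvalues_eq, sum_mulVec, dotProduct_sum, smul_mulVec, D, e]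
  have hconc (k : Fin d) :
      ∑ i, p i * Real.negMulLog (D i k) ≤ Real.negMulLog (hmix.eigenvalues k) := by
    simpa only [hmix_eig, smul_eq_mul] using Real.concaveOn_negMulLog.le_map_sum
      (fun i _ => hp i) hp1 (fun i _ => Set.mem_Ici.2 ((hρ i).re_dotProduct_nonneg _))
  have hsum : ∑ i, p i * ∑ j, Real.negMulLog ((hρ i).isHermitian.eigenvalues j)
      ≤ ∑ k, Real.negMulLog (hmix.eigenvalues k) :=
    calc _ ≤ ∑ i, p i * ∑ k, Real.negMulLog (D i k) :=
          Finset.sum_le_sum fun i _ => mul_le_mul_of_nonneg_left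
            ((hρ i).isHermitian.sum_map_eigenvalues_le_sum_map_re_dotProduct_mulVec e
              Real.concaveOn_negMulLog fun j => (hρ i).eigenvalues_nonneg j) (hp i)
      _ = ∑ k, ∑ i, p i * Real.negMulLog (D i k) := by
          simp_rw [Finset.mul_sum]
          exact Finset.sum_comm
      _ ≤ _ := Finset.sum_le_sum fun k _ => hconc k
  simp only [vnEntropy, mul_div_assoc', ← Finset.sum_div]
  exact div_le_div_of_nonneg_right hsum (Real.log_nonneg one_le_two)

theorem vnEntropy_concave {n d : ℕ} (p : Fin n → ℝ) (ρ : Fin n → Matrix (Fin d) (Fin d) ℂ)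
    (hp : ∀ i, 0 ≤ p i) (hp1 : ∑ i, p i = 1)
    (hρ : ∀ i, (ρ i).PosSemidef) (htr : ∀ i, (ρ i).trace = 1)
    (hmix : (∑ i, (p i : ℂ) • ρ i).IsHermitian) :
    ∑ i, p i * vnEntropy (hρ i).isHermitian ≤ vnEntropy hmix :=
  vnEntropy_concave_general p ρ hp hp1 hρ hmix
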